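/- Let ∇ = {∇^i : i ∈ I} be a finite exceptional set in a k-linear triangulated category D of finite type. Then the dual exceptional set exists: there are objects Δ_i, i ∈ I, satisfying Hom^•(Δ_n, ∇^i) = 0 for n > i and Δ_n ≅ ∇^n modulo the triangulated subcategory generated by {∇^j : j < n}. -/

import Mathlib

/-!
Fix `n` and let `S` be the triangulated hull of the `∇^j`, `j < n`. It suffices to find
`v : ∇^n ⟶ B` with `B ∈ S` such that precomposition with `v` is bijective on `Hom^•(-, ∇^j)` for
all `j < n`: by the long exact sequence, the cocone `Δ_n` of `v` is then left orthogonal to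
these `∇^j`.

The `∇^j` are added in decreasing order. To add `∇^a`, complete the current `v` to a triangle
`X → F → ∇^n → X⟦1⟧` with `X ∈ S`, take the universal map `g : F ⟶ G` to a finite sum of shifts
of `∇^a` (it exists because `Hom^•(F, ∇^a)` is finite dimensional and `End ∇^a = k`), and map the
triangle to a triangle on `X → F → G`. A five-lemma chase shows that the resulting
`c : ∇^n ⟶ Q` is bijective on `Hom^•(-, ∇^a)`, while nothing changes for `j > a` because
`Hom^•(G, ∇^j) = 0`. Working with `v` rather than with its cocone avoids the octahedral axiom,
which a pretriangulated category need not satisfy.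
-/

open CategoryTheory Limits Pretriangulated

universe v u

variable (k : Type*) [Field k]

variable (D : Type u) [Category.{v} D] [Preadditive D] [CategoryTheory.Linear k D]
  [HasZeroObject D] [HasShift D ℤ] [∀ n : ℤ, (shiftFunctor D n).Additive]
  [Pretriangulated D]

/-- `D` is of finite type over `k`: `⊕ₙ Hom(X, Y⟦n⟧)` is finite dimensional. -/
def FiniteType : Prop :=
  (∀ X Y : D, ∀ n : ℤ, FiniteDimensional k (X ⟶ (Y⟦n⟧ : D))) ∧
    ∀ X Y : D, ∃ N : ℕ, ∀ n : ℤ, (N : ℤ) < |n| → ∀ f : X ⟶ (Y⟦n⟧ : D), f = 0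

/-- An ordered family `E : I → D` is an exceptional set: `Hom^•(E i, E j) = 0` for
`i < j`, `Hom^n(E i, E i) = 0` for `n ≠ 0`, and `End (E i) = k`. -/
def IsExceptional {I : Type*} (lt : I → I → Prop) (E : I → D) : Prop :=
  (∀ i j, lt i j → ∀ n : ℤ, ∀ f : E i ⟶ ((E j)⟦n⟧ : D), f = 0) ∧
  (∀ i, ∀ n : ℤ, n ≠ 0 → ∀ f : E i ⟶ ((E i)⟦n⟧ : D), f = 0) ∧
  (∀ i (f : E i ⟶ E i), ∃ c : k, f = c • 𝟙 (E i))

/-- Closure conditions for a strictly full triangulated subcategory. -/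
structure IsTriangulatedSub (S : Set D) : Prop where
  zero_mem : ∀ Z : D, Limits.IsZero Z → Z ∈ S
  iso_closed : ∀ ⦃X Y : D⦄, (X ≅ Y) → X ∈ S → Y ∈ S
  shift_mem : ∀ (X : D) (n : ℤ), X ∈ S → (X⟦n⟧ : D) ∈ S
  ext_mem : ∀ (T : Triangle D), T ∈ (distTriang D) → T.obj₁ ∈ S → T.obj₃ ∈ S → T.obj₂ ∈ S

/-- The full triangulated subcategory generated by a set of objects. -/
def genTriang (S : Set D) : Set D :=
  ⋂₀ {T : Set D | IsTriangulatedSub D T ∧ S ⊆ T}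

/-- `X ≅ Y mod C`: the images of `X` and `Y` in the Verdier quotient `D/C` are
isomorphic; concretely, there is a morphism `X ⟶ Y` whose cone lies in `C`. -/
def IsoModulo (S : Set D) (X Y : D) : Prop :=
  ∃ (f : X ⟶ Y) (Z : D) (g : Y ⟶ Z) (h : Z ⟶ (X⟦(1:ℤ)⟧ : D)),
    Z ∈ S ∧ Triangle.mk f g h ∈ (distTriang D)

/-- Right orthogonal of a set of objects. -/
def rightOrth (S : Set D) : Set D := {Y | ∀ (A : D), A ∈ S → ∀ f : A ⟶ Y, f = 0}

section ShiftedHom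

variable {C : Type*} [Category C] [HasShift C ℤ]

def PrecompBijective {Y B : C} (v : Y ⟶ B) (A : C) : Prop :=
  ∀ p : ℤ, Function.Bijective (fun ψ : B ⟶ A⟦p⟧ => v ≫ ψ)

lemma PrecompBijective.of_comp {Y B B' A : C} {v : Y ⟶ B} {w : B ⟶ B'}
    (hvw : PrecompBijective (v ≫ w) A) (hw : PrecompBijective w A) : PrecompBijective v A :=
  fun p => (Function.Bijective.of_comp_iff _ (hw p)).1 <| by
    simpa only [Function.comp_def, Category.assoc] using hvw p

lemma PrecompBijective.comp_iso {Y B B' A : C} {v : Y ⟶ B} (hv : PrecompBijective v A)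
    (e : B ≅ B') : PrecompBijective (v ≫ e.hom) A := by
  intro p
  have he : Function.Bijective (fun ψ : B' ⟶ A⟦p⟧ => e.hom ≫ ψ) :=
    Function.bijective_iff_has_inverse.2
      ⟨fun φ => e.inv ≫ φ, fun _ => by simp, fun _ => by simp⟩
  simpa only [Function.comp_def, Category.assoc] using (hv p).comp he

lemma surjective_shift_precomp {F G A : C} (g : F ⟶ G)
    (hg : ∀ p : ℤ, Function.Surjective (fun π : G ⟶ A⟦p⟧ => g ≫ π)) (q : ℤ) :
    Function.Surjective (fun ρ : G⟦(1 : ℤ)⟧ ⟶ A⟦q⟧ => g⟦(1 : ℤ)⟧' ≫ ρ) := by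
  let adj : shiftFunctor C (1 : ℤ) ⊣ shiftFunctor C (-1) :=
    (shiftEquiv C (1 : ℤ)).toAdjunction
  let e := (shiftFunctorAdd' C q (-1) (q - 1) (by omega)).symm.app A
  intro θ
  obtain ⟨π, hπ⟩ := hg (q - 1) (adj.homEquiv _ _ θ ≫ e.hom)
  refine ⟨(adj.homEquiv _ _).symm (π ≫ e.inv), ?_⟩
  dsimp only at hπ ⊢
  rw [← adj.homEquiv_naturality_left_symm, ← Category.assoc, hπ]
  simp

variable [Preadditive C] [∀ n : ℤ, (shiftFunctor C n).Additive]

def HomShiftVanish (X A : C) : Prop := ∀ (p : ℤ) (f : X ⟶ A⟦p⟧), f = 0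

lemma shift_hom_eq_zero {X A : C} (m q : ℤ) (h : ∀ f : X ⟶ A⟦q - m⟧, f = 0)
    (f : X⟦m⟧ ⟶ A⟦q⟧) : f = 0 := by
  apply (shiftFunctor C (-m)).map_injective
  let e₁ := shiftShiftNeg X m
  let e₂ := (shiftFunctorAdd' C q (-m) (q - m) (by omega)).symm.app A
  rw [Functor.map_zero, ← cancel_epi e₁.inv, ← cancel_mono e₂.hom, Category.assoc,
    h (e₁.inv ≫ (shiftFunctor C (-m)).map f ≫ e₂.hom)]
  simp

lemma HomShiftVanish.shift {X A : C} (h : HomShiftVanish X A) (m : ℤ) :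
    HomShiftVanish (X⟦m⟧) A :=
  fun q => shift_hom_eq_zero m q (h (q - m))

end ShiftedHom

section Biproducts

variable {C : Type*} [Category C] [Preadditive C]

lemma bijective_biproduct_ι_comp {ι : Type} [Fintype ι] (X : ι → C) [HasBiproduct X]
    (M : C) :
    Function.Bijective (fun ψ : ⨁ X ⟶ M => fun t => biproduct.ι X t ≫ ψ) :=
  Function.bijective_iff_has_inverse.2
    ⟨biproduct.desc, fun ψ => biproduct.hom_ext' _ _ (by simp), fun φ => funext (by simp)⟩

lemma bijective_biproduct_lift_comp {ι : Type} [Fintype ι] {X : ι → C} [HasBiproduct X]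
    {F M : C} (f : ∀ t, F ⟶ X t) (t₀ : ι) (h0 : ∀ t, t ≠ t₀ → ∀ ψ : X t ⟶ M, ψ = 0)
    (hf : Function.Bijective (fun ψ : X t₀ ⟶ M => f t₀ ≫ ψ)) :
    Function.Bijective (fun ψ : ⨁ X ⟶ M => biproduct.lift f ≫ ψ) := by
  have hι : Function.Bijective (fun ψ : ⨁ X ⟶ M => biproduct.ι X t₀ ≫ ψ) := by
    refine ⟨fun ψ₁ ψ₂ h => biproduct.hom_ext' _ _ fun t => ?_,
      fun φ => ⟨biproduct.π X t₀ ≫ φ, by simp⟩⟩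
    by_cases ht : t = t₀
    · subst ht; exact h
    · rw [h0 t ht (_ ≫ ψ₁), h0 t ht (_ ≫ ψ₂)]
  have hcomp : (fun ψ : ⨁ X ⟶ M => biproduct.lift f ≫ ψ) =
      (fun φ => f t₀ ≫ φ) ∘ (fun ψ => biproduct.ι X t₀ ≫ ψ) := by
    funext ψ
    rw [Function.comp_apply, biproduct.lift_eq, Preadditive.sum_comp,
      Finset.sum_eq_single t₀ (fun t _ ht => by rw [Category.assoc, h0 t ht (_ ≫ ψ), comp_zero])
        (by simp), Category.assoc]
  rw [hcomp]
  exact hf.comp hι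

variable {k} [Linear k C]

-- A basis over the division ring `End M` rather than over `k`: the shift functors are not
-- assumed `k`-linear, so for `M = A⟦q⟧` the ring `End M` need not be `k`.
lemma exists_bijective_biproduct_lift_comp [HasFiniteBiproducts C] (F M : C)
    [FiniteDimensional k (F ⟶ M)] (hM : ∀ ψ : End M, IsUnit ψ ∨ ψ = 0) :
    ∃ (r : ℕ) (b : Fin r → (F ⟶ M)),
      Function.Bijective (fun ψ : (⨁ fun _ : Fin r => M) ⟶ M => biproduct.lift b ≫ ψ) := by
  rcases subsingleton_or_nontrivial (End M) with hM₀ | _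
  · have hzero : ∀ {X : C} (f : X ⟶ M), f = 0 := fun f => by
      rw [← Category.comp_id f, hM₀.elim (𝟙 M : End M) 0, comp_zero]
    exact ⟨0, Fin.elim0, fun _ _ _ => hzero _ |>.trans (hzero _).symm,
      fun f => ⟨0, (comp_zero).trans (hzero f).symm⟩⟩
  let _ : DivisionRing (End M) := DivisionRing.ofIsUnitOrEqZero hM
  have : IsScalarTower k (End M) (F ⟶ M) := ⟨fun _ _ _ => Linear.comp_smul _ _ _ _ _ _⟩
  have : Module.Finite (End M) (F ⟶ M) := Module.Finite.of_restrictScalars_finite k _ _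
  let b := Module.finBasis (End M) (F ⟶ M)
  refine ⟨_, b, ?_⟩
  have hcomp : (fun ψ : (⨁ fun _ => M) ⟶ M => biproduct.lift b ≫ ψ) =
      b.equivFun.symm ∘ (fun ψ t => biproduct.ι (fun _ => M) t ≫ ψ) := by
    funext ψ
    simp [biproduct.lift_eq, Preadditive.sum_comp, Module.Basis.equivFun_symm_apply,
      End.smul_right]
  rw [hcomp]
  exact b.equivFun.symm.bijective.comp (bijective_biproduct_ι_comp _ M)

end Biproducts

section Triangles

variable {C : Type*} [Category C] [Preadditive C] [HasZeroObject C] [HasShift C ℤ]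
  [∀ n : ℤ, (shiftFunctor C n).Additive] [Pretriangulated C]

lemma isTriangulatedSub_setOf_homShiftVanish (A : C) :
    IsTriangulatedSub C {X | HomShiftVanish X A} where
  zero_mem _ hZ _ _ := hZ.eq_of_src _ _
  iso_closed X Y e hX p f := by
    rw [← cancel_epi e.hom, hX p (e.hom ≫ f), comp_zero]
  shift_mem X n hX := hX.shift n
  ext_mem T hT h₁ h₃ p f := by
    obtain ⟨ψ, rfl⟩ := Triangle.yoneda_exact₂ T hT f (h₁ p _)
    rw [h₃ p ψ, comp_zero]

lemma homShiftVanish_iff_precompBijective {X Y Z : C} {u : X ⟶ Y} {v : Y ⟶ Z}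
    {w : Z ⟶ X⟦(1 : ℤ)⟧} (hT : Triangle.mk u v w ∈ distTriang C) (A : C) :
    HomShiftVanish X A ↔ PrecompBijective v A := by
  constructor
  · intro hX p
    refine ⟨fun ψ₁ ψ₂ h => sub_eq_zero.1 ?_, fun f => ?_⟩
    · have h' : v ≫ (ψ₁ - ψ₂) = 0 := by rw [Preadditive.comp_sub, sub_eq_zero]; exact h
      obtain ⟨χ, hχ⟩ := Triangle.yoneda_exact₃ _ hT (ψ₁ - ψ₂) h'
      rw [hχ, hX.shift 1 p χ]
      exact comp_zero
    · exact (Triangle.yoneda_exact₂ _ hT f (hX p _)).imp fun ψ h => h.symm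
  · intro hv p f
    have huv : u ≫ v = 0 := comp_distTriang_mor_zero₁₂ _ hT
    have hvw : v ≫ w = 0 := comp_distTriang_mor_zero₂₃ _ hT
    let e := (shiftFunctorAdd' C p 1 (p + 1) rfl).symm.app A
    have hw : w ≫ f⟦(1 : ℤ)⟧' = 0 := by
      rw [← cancel_mono e.hom, zero_comp]
      apply (hv (p + 1)).injective
      simp only [comp_zero, ← Category.assoc, hvw, zero_comp]
    obtain ⟨θ, hθ⟩ : ∃ θ : Y⟦(1 : ℤ)⟧ ⟶ A⟦p⟧⟦(1 : ℤ)⟧, f⟦(1 : ℤ)⟧' = (-u⟦(1 : ℤ)⟧') ≫ θ :=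
      Triangle.yoneda_exact₃ _ (rot_of_distTriang _ hT) _ hw
    obtain ⟨ρ, rfl⟩ := (shiftFunctor C (1 : ℤ)).map_surjective θ
    obtain ⟨χ, rfl⟩ := (hv p).surjective ρ
    apply (shiftFunctor C (1 : ℤ)).map_injective
    rw [hθ, Functor.map_zero, Preadditive.neg_comp, ← Functor.map_comp, ← Category.assoc, huv,
      zero_comp, Functor.map_zero, neg_zero]

lemma isTriangulatedSub_genTriang (T : Set C) : IsTriangulatedSub C (genTriang C T) where
  zero_mem Z hZ _ hS := hS.1.zero_mem Z hZ
  iso_closed _ _ e hX _ hS := hS.1.iso_closed e (hX _ hS)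
  shift_mem X n hX _ hS := hS.1.shift_mem X n (hX _ hS)
  ext_mem T hT h₁ h₃ _ hS := hS.1.ext_mem T hT (h₁ _ hS) (h₃ _ hS)

lemma subset_genTriang (T : Set C) : T ⊆ genTriang C T :=
  fun _ hX _ hS => hS.2 hX

lemma genTriang_subset {S T : Set C} (hS : IsTriangulatedSub C S) (h : T ⊆ S) :
    genTriang C T ⊆ S :=
  Set.sInter_subset_of_mem ⟨hS, h⟩

open ZeroObject in
lemma IsTriangulatedSub.biproduct_mem {S : Set C} (hS : IsTriangulatedSub C S) {ι : Type*}
    [Finite ι] (X : ι → C) [HasBiproduct X] (h : ∀ t, X t ∈ S) : (⨁ X) ∈ S := by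
  let P : ObjectProperty C := fun Z => Z ∈ S
  have : P.IsClosedUnderIsomorphisms := ⟨fun e hX => hS.iso_closed e hX⟩
  have : P.IsTriangulated :=
    { exists_zero := ⟨0, isZero_zero C, hS.zero_mem _ (isZero_zero C)⟩
      isStableUnderShiftBy := fun n => ⟨fun X hX => hS.shift_mem X n hX⟩
      ext₂' := fun T hT h₁ h₃ => P.le_isoClosure _ (hS.ext_mem T hT h₁ h₃) }
  exact P.prop_of_iso (biproduct.isoProduct X).symm (P.prop_product h)

lemma precompBijective_of_triangle_morphism {X F Y G Q A : C} {a : X ⟶ F} {u : F ⟶ Y}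
    {b : Y ⟶ X⟦(1 : ℤ)⟧} {g : F ⟶ G} {j : G ⟶ Q} {h : Q ⟶ X⟦(1 : ℤ)⟧} {c : Y ⟶ Q}
    (hT₁ : Triangle.mk a u b ∈ distTriang C) (hT₂ : Triangle.mk (a ≫ g) j h ∈ distTriang C)
    (hc₁ : u ≫ c = g ≫ j) (hc₂ : c ≫ h = b) (hg : PrecompBijective g A) :
    PrecompBijective c A := by
  intro p
  refine ⟨(injective_iff_map_eq_zero (Preadditive.leftComp _ c)).2 fun ψ hψ => ?_, fun f => ?_⟩
  · replace hψ : c ≫ ψ = 0 := hψ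
    have hjψ : j ≫ ψ = 0 := (hg p).injective <| by
      rw [← Category.assoc, ← hc₁, Category.assoc, hψ, comp_zero, comp_zero]
    obtain ⟨χ, hχ⟩ : ∃ χ : X⟦(1 : ℤ)⟧ ⟶ A⟦p⟧, ψ = h ≫ χ := Triangle.yoneda_exact₃ _ hT₂ ψ hjψ
    have hbχ : b ≫ χ = 0 := by rw [← hc₂, Category.assoc, ← hχ, hψ]
    obtain ⟨θ, hθ⟩ : ∃ θ : F⟦(1 : ℤ)⟧ ⟶ A⟦p⟧, χ = (-a⟦(1 : ℤ)⟧') ≫ θ :=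
      Triangle.yoneda_exact₃ _ (rot_of_distTriang _ hT₁) χ hbχ
    obtain ⟨ρ, rfl⟩ := surjective_shift_precomp g (fun q => (hg q).surjective) p θ
    have hag : h ≫ a⟦(1 : ℤ)⟧' ≫ g⟦(1 : ℤ)⟧' = 0 := by
      rw [← Functor.map_comp]
      exact comp_distTriang_mor_zero₃₁ _ hT₂
    rw [hχ, hθ]
    simp [reassoc_of% hag]
  · obtain ⟨π, hπ⟩ := (hg p).surjective (u ≫ f)
    replace hπ : g ≫ π = u ≫ f := hπ
    have hagπ : (a ≫ g) ≫ π = 0 := by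
      have hau : a ≫ u = 0 := comp_distTriang_mor_zero₁₂ _ hT₁
      rw [Category.assoc, hπ, ← Category.assoc, hau, zero_comp]
    obtain ⟨ψ, hψ⟩ : ∃ ψ : Q ⟶ A⟦p⟧, π = j ≫ ψ := Triangle.yoneda_exact₂ _ hT₂ π hagπ
    have hu : u ≫ (f - c ≫ ψ) = 0 := by
      rw [Preadditive.comp_sub, ← Category.assoc, hc₁, Category.assoc, ← hψ, hπ, sub_self]
    obtain ⟨χ, hχ⟩ : ∃ χ : X⟦(1 : ℤ)⟧ ⟶ A⟦p⟧, f - c ≫ ψ = b ≫ χ :=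
      Triangle.yoneda_exact₃ _ hT₁ _ hu
    refine ⟨ψ + h ≫ χ, ?_⟩
    dsimp only
    rw [Preadditive.comp_add, ← Category.assoc, hc₂, ← hχ, add_sub_cancel]

lemma exists_precompBijective_extend {S : Set C} (hS : IsTriangulatedSub C S) {A : C}
    (hA : A ∈ S) (hApprox : ∀ F : C, ∃ G ∈ genTriang C {A}, ∃ g : F ⟶ G, PrecompBijective g A)
    {Y B : C} (v : Y ⟶ B) (hB : B ∈ S) :
    ∃ Q ∈ S, ∃ c : Y ⟶ Q, PrecompBijective c A ∧
      ∀ A' : C, HomShiftVanish A A' → PrecompBijective v A' → PrecompBijective c A' := by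
  set b := v ≫ (shiftNegShift B (1 : ℤ)).inv
  obtain ⟨F, a, u, hT₁⟩ := distinguished_cocone_triangle₂ b
  obtain ⟨G, hG, g, hg⟩ := hApprox F
  obtain ⟨Q, j, h, hT₂⟩ := distinguished_cocone_triangle (a ≫ g)
  obtain ⟨c, hc₁, hc₂⟩ : ∃ c : Y ⟶ Q, u ≫ c = g ≫ j ∧ b ≫ (𝟙 _)⟦(1 : ℤ)⟧' = c ≫ h :=
    complete_distinguished_triangle_morphism _ _ hT₁ hT₂ (𝟙 _) g
      (by exact (Category.id_comp _).symm)
  replace hc₂ : c ≫ h = b := by simpa using hc₂.symm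
  have hGS : G ∈ S := genTriang_subset hS (Set.singleton_subset_iff.2 hA) hG
  have hQS : Q ∈ S :=
    hS.ext_mem _ (rot_of_distTriang _ hT₂) hGS (hS.shift_mem _ 1 (hS.shift_mem _ (-1) hB))
  refine ⟨Q, hQS, c, precompBijective_of_triangle_morphism hT₁ hT₂ hc₁ hc₂ hg,
    fun A' hAA' hv => ?_⟩
  have hGA' : HomShiftVanish G A' :=
    genTriang_subset (isTriangulatedSub_setOf_homShiftVanish A')
      (Set.singleton_subset_iff.2 hAA') hG
  have hh : PrecompBijective h A' :=
    (homShiftVanish_iff_precompBijective (rot_of_distTriang _ hT₂) A').1 hGA'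
  have hb : PrecompBijective (c ≫ h) A' := by
    rw [hc₂]
    exact hv.comp_iso (shiftNegShift B (1 : ℤ)).symm
  exact hb.of_comp hh

end Triangles

section Exceptional

variable {k} {C : Type*} [Category C] [Preadditive C] [Linear k C] [HasShift C ℤ]
  [∀ n : ℤ, (shiftFunctor C n).Additive]

lemma isUnit_or_eq_zero_of_shift {A : C} (hend : ∀ f : A ⟶ A, ∃ c : k, f = c • 𝟙 A) (q : ℤ)
    (ψ : End (A⟦q⟧)) : IsUnit ψ ∨ ψ = 0 := by
  obtain ⟨ψ₀, rfl⟩ := (shiftFunctor C q).map_surjective ψ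
  obtain ⟨c, rfl⟩ := hend ψ₀
  by_cases hc : c = 0
  · right
    rw [hc, zero_smul, Functor.map_zero]
  · left
    have : IsIso (c • 𝟙 A) := ⟨c⁻¹ • 𝟙 A, by simp [smul_smul, hc], by simp [smul_smul, hc]⟩
    rw [isUnit_iff_isIso]
    infer_instance

variable [HasZeroObject C] [Pretriangulated C]

lemma exists_precompBijective_genTriang_singleton {A F : C}
    (hend : ∀ f : A ⟶ A, ∃ c : k, f = c • 𝟙 A)
    (hvan : ∀ n : ℤ, n ≠ 0 → ∀ f : A ⟶ A⟦n⟧, f = 0)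
    (hfin : ∀ q : ℤ, FiniteDimensional k (F ⟶ A⟦q⟧))
    (N : ℕ) (hN : ∀ q : ℤ, (N : ℤ) < |q| → ∀ f : F ⟶ A⟦q⟧, f = 0) :
    ∃ G ∈ genTriang C {A}, ∃ g : F ⟶ G, PrecompBijective g A := by
  choose r b hb using fun q : Finset.Icc (-(N : ℤ)) N =>
    exists_bijective_biproduct_lift_comp (k := k) F (A⟦(q : ℤ)⟧)
      (isUnit_or_eq_zero_of_shift hend q)
  let G : Finset.Icc (-(N : ℤ)) N → C := fun q => ⨁ fun _ : Fin (r q) => A⟦(q : ℤ)⟧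
  refine ⟨⨁ G, ?_, biproduct.lift fun q => biproduct.lift (b q), fun p => ?_⟩
  · have hgen := isTriangulatedSub_genTriang (C := C) {A}
    exact hgen.biproduct_mem _ fun q =>
      hgen.biproduct_mem _ fun _ => hgen.shift_mem _ _ (subset_genTriang _ rfl)
  have hG : ∀ q : Finset.Icc (-(N : ℤ)) N, (q : ℤ) ≠ p → ∀ ψ : G q ⟶ A⟦p⟧, ψ = 0 :=
    fun q hq ψ => biproduct.hom_ext' _ _ fun _ => by
      rw [comp_zero]
      exact shift_hom_eq_zero _ _ (hvan _ (sub_ne_zero.2 hq.symm)) _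
  by_cases hp : p ∈ Finset.Icc (-(N : ℤ)) N
  · exact bijective_biproduct_lift_comp _ ⟨p, hp⟩
      (fun q hq => hG q fun h => hq (Subtype.ext h)) (hb ⟨p, hp⟩)
  · have hNp : (N : ℤ) < |p| := by
      rw [Finset.mem_Icc] at hp
      rw [lt_abs]
      omega
    have hGp : ∀ ψ : ⨁ G ⟶ A⟦p⟧, ψ = 0 := fun ψ => biproduct.hom_ext' _ _ fun q => by
      rw [comp_zero]
      exact hG q (fun h => hp (h ▸ q.2)) _
    exact ⟨fun ψ₁ ψ₂ _ => (hGp ψ₁).trans (hGp ψ₂).symm,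
      fun f => ⟨0, comp_zero.trans (hN p hNp f).symm⟩⟩

open ZeroObject in
lemma exists_precompBijective_exceptional {I : Type*} [LinearOrder I] (hft : FiniteType k C)
    {E : I → C} (hE : IsExceptional k C (· < ·) E) {S : Set C} (hS : IsTriangulatedSub C S)
    (Y : C) (s : Finset I) (hs : ∀ j ∈ s, E j ∈ S) :
    ∃ B ∈ S, ∃ v : Y ⟶ B, ∀ j ∈ s, PrecompBijective v (E j) := by
  classical
  induction s using Finset.induction_on_min with
  | empty => exact ⟨0, hS.zero_mem _ (isZero_zero C), 0, by simp⟩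
  | insert a s has ih =>
    obtain ⟨B, hB, v, hv⟩ := ih fun j hj => hs j (Finset.mem_insert_of_mem hj)
    have hApprox (F : C) : ∃ G ∈ genTriang C {E a}, ∃ g : F ⟶ G, PrecompBijective g (E a) :=
      have ⟨N, hN⟩ := hft.2 F (E a)
      exists_precompBijective_genTriang_singleton (hE.2.2 a) (hE.2.1 a) (hft.1 F (E a)) N hN
    obtain ⟨Q, hQ, c, hca, hc⟩ :=
      exists_precompBijective_extend hS (hs a (Finset.mem_insert_self a s)) hApprox v hB
    refine ⟨Q, hQ, c, fun j hj => ?_⟩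
    rcases Finset.mem_insert.1 hj with rfl | hj
    · exact hca
    · exact hc _ (hE.1 a j (has j hj)) (hv j hj)

end Exceptional

theorem stmt3 {I : Type*} [LinearOrder I] [Fintype I]
    (hft : FiniteType k D)
    (E : I → D) (hE : IsExceptional k D (· < ·) E) :
    ∃ Δ : I → D,
      (∀ n i : I, i < n → ∀ m : ℤ, ∀ f : Δ n ⟶ ((E i)⟦m⟧ : D), f = 0) ∧
      (∀ n : I, IsoModulo D (genTriang D {X | ∃ j, j < n ∧ X = E j}) (Δ n) (E n)) := by
  choose B hB v hv using fun n : I =>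
    exists_precompBijective_exceptional hft hE
      (isTriangulatedSub_genTriang {X | ∃ j, j < n ∧ X = E j}) (E n)
      (Finset.univ.filter (· < n))
      (fun j hj => subset_genTriang _ ⟨j, (Finset.mem_filter.1 hj).2, rfl⟩)
  choose Δ u w hT using fun n => distinguished_cocone_triangle₁ (v n)
  refine ⟨Δ, fun n i hi => ?_, fun n => ⟨u n, B n, v n, w n, hB n, hT n⟩⟩
  exact (homShiftVanish_iff_precompBijective (hT n) (E i)).2 (hv n i (by simpa using hi))
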